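/- For a smooth function f with ∇f(x) ≠ 0, the maximizer of f over the closed ball B̄_ε(x) satisfies y_max = x + ε ∇f(x)/|∇f(x)| + O(ε²), i.e., the maximum over the ball is attained asymptotically in the gradient direction. -/

import Mathlib

open Metric Asymptotics

/-!
At a maximizer `y` of `f` on `closedBall x ε` with `∇f(y) ≠ 0`, the first-order condition
`⟪∇f(y), z - y⟫ ≤ 0` for all `z` in the ball forces `y = x + ε • (∇f(y) / ‖∇f(y)‖)`: testing it
at `z = x + ε • (∇f(y) / ‖∇f(y)‖)` gives equality in Cauchy–Schwarz. Since `f` is `C²`,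
`∇f(y) - ∇f(x) = O(‖y - x‖) = O(ε)`, and normalization is Lipschitz away from `0`,
so `y` differs from `x + ε • (∇f(x) / ‖∇f(x)‖)` by `ε • O(ε)`.
-/

open Filter Topology NormedSpace
open scoped InnerProductSpace

theorem NormedSpace.norm_mul_norm_normalize_sub_normalize_le {V : Type*} [NormedAddCommGroup V]
    [NormedSpace ℝ V] (a b : V) : ‖b‖ * ‖normalize a - normalize b‖ ≤ 2 * ‖a - b‖ := by
  have hna : ‖normalize a‖ ≤ 1 := by
    by_cases ha : a = 0
    · simp [ha]
    · exact (norm_normalize_eq_one_iff.mpr ha).le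
  have hsplit : ‖b‖ • (normalize a - normalize b) = (a - b) + (‖b‖ - ‖a‖) • normalize a := by
    rw [smul_sub, norm_smul_normalize, sub_smul, norm_smul_normalize]
    abel
  calc ‖b‖ * ‖normalize a - normalize b‖
      = ‖(a - b) + (‖b‖ - ‖a‖) • normalize a‖ := by rw [← hsplit, norm_smul, norm_norm]
    _ ≤ ‖a - b‖ + |‖b‖ - ‖a‖| * ‖normalize a‖ := by
      grw [norm_add_le, norm_smul, Real.norm_eq_abs]
    _ ≤ ‖a - b‖ + ‖a - b‖ * 1 := by
      gcongr
      rw [abs_sub_comm]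
      exact abs_norm_sub_norm_le a b
    _ = 2 * ‖a - b‖ := by ring

section InnerProductSpace

variable {E : Type*} [NormedAddCommGroup E] [InnerProductSpace ℝ E]

theorem eq_add_smul_normalize_of_forall_inner_sub_nonpos {x y p : E} {ε : ℝ} (hp : p ≠ 0)
    (hy : y ∈ closedBall x ε) (h : ∀ z ∈ closedBall x ε, ⟪p, z - y⟫_ℝ ≤ 0) :
    y = x + ε • normalize p := by
  have hε : 0 ≤ ε := nonempty_closedBall.mp ⟨y, hy⟩
  have hpos : 0 < ‖p‖ := norm_pos_iff.mpr hp
  have hyx : ‖y - x‖ ≤ ε := by rwa [← dist_eq_norm, ← mem_closedBall]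
  have hz : x + ε • normalize p ∈ closedBall x ε := by
    rw [mem_closedBall, dist_eq_norm, add_sub_cancel_left, norm_smul,
      norm_normalize_eq_one_iff.mpr hp, mul_one, Real.norm_of_nonneg hε]
  have hinner : ε * ‖p‖ ≤ ⟪p, y - x⟫_ℝ := by
    have := h _ hz
    rw [show x + ε • NormedSpace.normalize p - y = ε • NormedSpace.normalize p - (y - x) by abel,
      inner_sub_right, NormedSpace.normalize, inner_smul_right, inner_smul_right,
      real_inner_self_eq_norm_sq] at this
    field_simp at this
    linarith
  have hcs : ⟪p, y - x⟫_ℝ ≤ ‖p‖ * ‖y - x‖ := real_inner_le_norm p (y - x)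
  have hnorm : ‖y - x‖ = ε := le_antisymm hyx (by nlinarith)
  have hcol : ‖y - x‖ • p = ‖p‖ • (y - x) :=
    inner_eq_norm_mul_iff_real.mp (le_antisymm hcs (by rw [hnorm]; linarith))
  rw [hnorm] at hcol
  rw [NormedSpace.normalize, smul_smul, mul_comm, ← smul_smul, hcol, smul_smul,
    inv_mul_cancel₀ hpos.ne', one_smul, add_sub_cancel]

theorem IsMaxOn.inner_gradient_sub_nonpos [CompleteSpace E] {f : E → ℝ} {s : Set E} {y : E}
    (hmax : IsMaxOn f s y) (hs : Convex ℝ s) (hy : y ∈ s) (hf : DifferentiableAt ℝ f y) :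
    ∀ z ∈ s, ⟪gradient f y, z - y⟫_ℝ ≤ 0 := fun z hz => by
  rw [inner_gradient_left]
  exact hmax.localize.hasFDerivWithinAt_nonpos hf.hasFDerivAt.hasFDerivWithinAt
    (sub_mem_posTangentConeAt_of_segment_subset (hs.segment_subset hy hz))

theorem IsMaxOn.eq_add_smul_normalize_gradient [CompleteSpace E] {f : E → ℝ} {x y : E} {ε : ℝ}
    (hmax : IsMaxOn f (closedBall x ε) y) (hy : y ∈ closedBall x ε)
    (hf : DifferentiableAt ℝ f y) (hgrad : gradient f y ≠ 0) :
    y = x + ε • normalize (gradient f y) :=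
  eq_add_smul_normalize_of_forall_inner_sub_nonpos hgrad hy
    (hmax.inner_gradient_sub_nonpos (convex_closedBall x ε) hy hf)

theorem ContDiffAt.isBigO_gradient_sub [CompleteSpace E] {f : E → ℝ} {x : E} {n : WithTop ℕ∞}
    (hf : ContDiffAt ℝ n f x) (hn : 2 ≤ n) :
    (fun z => gradient f z - gradient f x) =O[𝓝 x] (fun z => z - x) := by
  have hfd : DifferentiableAt ℝ (fderiv ℝ f) x :=
    (hf.fderiv_right (m := 1) hn).differentiableAt one_ne_zero
  have hiso : ∀ z, ‖gradient f z - gradient f x‖ = ‖fderiv ℝ f z - fderiv ℝ f x‖ := fun z => by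
    rw [gradient, gradient, ← map_sub, LinearIsometryEquiv.norm_map]
  rw [← isBigO_norm_left]
  simp only [hiso]
  exact isBigO_norm_left.mpr hfd.isBigO_sub

end InnerProductSpace

/-- For `f` twice continuously differentiable near `x` with `∇f(x) ≠ 0`, any
maximizer `y_max(ε)` of `f` over the closed ball `B̄_ε(x)` satisfies
`y_max(ε) = x + ε ∇f(x)/‖∇f(x)‖ + O(ε²)` as `ε → 0⁺`. -/
theorem max_attained_in_gradient_direction
    (d : ℕ) (f : EuclideanSpace ℝ (Fin d) → ℝ)
    (x : EuclideanSpace ℝ (Fin d))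
    (hf : ContDiffAt ℝ 2 f x) (hgrad : gradient f x ≠ 0)
    (ymax : ℝ → EuclideanSpace ℝ (Fin d))
    (hmem : ∀ ε > (0 : ℝ), ymax ε ∈ closedBall x ε)
    (hmax : ∀ ε > (0 : ℝ), ∀ y ∈ closedBall x ε, f y ≤ f (ymax ε)) :
    (fun ε : ℝ => ymax ε - (x + (ε / ‖gradient f x‖) • gradient f x))
      =O[nhdsWithin 0 (Set.Ioi 0)] (fun ε : ℝ => ε ^ 2) := by
  have hid : Tendsto (fun ε : ℝ => ε) (𝓝[>] 0) (𝓝 0) :=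
    tendsto_nhdsWithin_of_tendsto_nhds tendsto_id
  have hyx : (fun ε => ymax ε - x) =O[𝓝[>] 0] (fun ε => ε) :=
    IsBigO.of_bound' <| eventually_nhdsWithin_of_forall fun ε hε => by
      simpa [← dist_eq_norm, abs_of_pos (Set.mem_Ioi.mp hε)] using hmem ε hε
  have hy : Tendsto ymax (𝓝[>] 0) (𝓝 x) :=
    tendsto_sub_nhds_zero_iff.mp (hyx.trans_tendsto hid)
  have hgy : (fun ε => gradient f (ymax ε) - gradient f x) =O[𝓝[>] 0] (fun ε => ε) :=
    ((hf.isBigO_gradient_sub le_rfl).comp_tendsto hy).trans hyx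
  have hdiff : ∀ᶠ ε in 𝓝[>] 0, DifferentiableAt ℝ f (ymax ε) :=
    hy.eventually ((hf.eventually (by simp)).mono fun z hz => hz.differentiableAt two_ne_zero)
  have hne : ∀ᶠ ε in 𝓝[>] 0, gradient f (ymax ε) ≠ 0 :=
    (tendsto_sub_nhds_zero_iff.mp (hgy.trans_tendsto hid)).eventually_ne hgrad
  have heq : (fun ε : ℝ => ymax ε - (x + (ε / ‖gradient f x‖) • gradient f x)) =ᶠ[𝓝[>] 0]
      fun ε => ε • (normalize (gradient f (ymax ε)) - normalize (gradient f x)) := by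
    filter_upwards [hdiff, hne, self_mem_nhdsWithin] with ε hdε hnε hε
    conv_lhs => rw [IsMaxOn.eq_add_smul_normalize_gradient (hmax ε hε) (hmem ε hε) hdε hnε]
    simp only [NormedSpace.normalize, smul_sub, smul_smul, div_eq_mul_inv]
    abel
  have hnorm : (fun ε => normalize (gradient f (ymax ε)) - normalize (gradient f x))
      =O[𝓝[>] 0] (fun ε => gradient f (ymax ε) - gradient f x) :=
    IsBigO.of_bound (2 / ‖gradient f x‖) <| Eventually.of_forall fun ε => by
      rw [div_mul_eq_mul_div, le_div_iff₀ (norm_pos_iff.mpr hgrad), mul_comm]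
      exact norm_mul_norm_normalize_sub_normalize_le _ _
  refine heq.trans_isBigO ?_
  simpa only [smul_eq_mul, sq] using (isBigO_refl (fun ε : ℝ => ε) _).smul (hnorm.trans hgy)
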